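/- Let x ∈ ℂ^d be a unit vector and U = I − 2|x⟩⟨x|. There exists a unit vector ψ ∈ ℂ^d (a rank-one density matrix) with diag(U† |ψ⟩⟨ψ|) = 0 if and only if there exists a subset Δ ⊆ {1,...,d} with ∑_{i∈Δ} |x_i|² = 1/2. -/

import Mathlib

/-!
Since `U` is Hermitian, the `i`-th diagonal entry of `U† |ψ⟩⟨ψ|` is `(ψ_i - 2 c x_i) ψ̄_i`
with `c = ⟨x, ψ⟩`. If all of them vanish, then `ψ_i = 2 c x_i` on the support `Δ` of `ψ`;
summing `|ψ_i|² = 2 c x_i ψ̄_i` gives `1 = 2 |c|²`, so `|x_i|² = |ψ_i|² / 2` on `Δ` and the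
weights of `x` on `Δ` add up to `1/2`. Conversely, `ψ = √2 · 1_Δ x` is a unit vector with
`c = 1/√2`, which makes every diagonal entry vanish.
-/

open Matrix

variable {ι 𝕜 : Type*} [Fintype ι] [RCLike 𝕜]

theorem star_dotProduct_self_eq_sum_norm_sq (v : ι → 𝕜) :
    star v ⬝ᵥ v = ((∑ i, ‖v i‖ ^ 2 : ℝ) : 𝕜) := by
  push_cast
  exact Finset.sum_congr rfl fun i _ => RCLike.conj_mul (v i)

theorem mul_vecMulVec_star_self_apply_self (A : Matrix ι ι 𝕜) (ψ : ι → 𝕜) (i : ι) :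
    (A * vecMulVec ψ (star ψ)) i i = (A *ᵥ ψ) i * star (ψ i) := by
  rw [mul_vecMulVec, vecMulVec_apply]; rfl

theorem householder_conjTranspose_mulVec [DecidableEq ι] (x ψ : ι → 𝕜) :
    (1 - (2 : 𝕜) • vecMulVec x (star x))ᴴ *ᵥ ψ = ψ - (2 * (star x ⬝ᵥ ψ)) • x := by
  ext i
  simp only [conjTranspose_sub, conjTranspose_one, conjTranspose_smul, star_ofNat,
    conjTranspose_vecMulVec, star_star, sub_mulVec, one_mulVec, smul_mulVec, vecMulVec_mulVec,
    op_smul_eq_smul, Pi.sub_apply, Pi.smul_apply, smul_eq_mul, sub_right_inj]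
  ring

theorem sum_norm_sq_support_eq_half {x ψ : ι → 𝕜} (hψ : star ψ ⬝ᵥ ψ = 1)
    (h : ∀ i, (ψ i - 2 * (star x ⬝ᵥ ψ) * x i) * star (ψ i) = 0) :
    ∑ i with ψ i ≠ 0, ‖x i‖ ^ 2 = 1 / 2 := by
  set c := star x ⬝ᵥ ψ
  have hψ_norm : ∑ i, ‖ψ i‖ ^ 2 = 1 := by
    exact_mod_cast (star_dotProduct_self_eq_sum_norm_sq ψ).symm.trans hψ
  have hψ_eq : ∀ i, ψ i ≠ 0 → ψ i = 2 * c * x i := fun i hi =>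
    sub_eq_zero.mp ((mul_eq_zero.mp (h i)).resolve_right (star_ne_zero.mpr hi))
  have hc : 2 * ‖c‖ ^ 2 = 1 := by
    have hsum : star ψ ⬝ᵥ ψ = 2 * c * (star ψ ⬝ᵥ x) := by
      simp only [dotProduct, Finset.mul_sum]
      exact Finset.sum_congr rfl fun i _ => by linear_combination h i
    have hconj : star ψ ⬝ᵥ x = star c := by simpa using star_dotProduct_star ψ (star x)
    rw [hψ, hconj, mul_assoc, RCLike.star_def, RCLike.mul_conj] at hsum
    exact_mod_cast hsum.symm
  have hx_eq : ∀ i, ψ i ≠ 0 → ‖x i‖ ^ 2 = ‖ψ i‖ ^ 2 / 2 := fun i hi => by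
    rw [hψ_eq i hi, norm_mul, norm_mul, RCLike.norm_two, mul_pow, mul_pow]
    linear_combination -(‖x i‖ ^ 2) * hc
  calc ∑ i with ψ i ≠ 0, ‖x i‖ ^ 2 = ∑ i with ψ i ≠ 0, ‖ψ i‖ ^ 2 / 2 :=
        Finset.sum_congr rfl fun i hi => hx_eq i (Finset.mem_filter.mp hi).2
    _ = ∑ i, ‖ψ i‖ ^ 2 / 2 := Finset.sum_filter_of_ne fun i _ hi => by simpa using hi
    _ = 1 / 2 := by rw [← Finset.sum_div, hψ_norm]

theorem star_dotProduct_indicator (x : ι → 𝕜) (Δ : Finset ι) :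
    star x ⬝ᵥ Set.indicator ↑Δ x = ((∑ i ∈ Δ, ‖x i‖ ^ 2 : ℝ) : 𝕜) := by
  classical
  simp only [dotProduct, Set.indicator_apply, Finset.mem_coe, mul_ite, mul_zero,
    Finset.sum_ite_mem, Finset.univ_inter]
  push_cast
  exact Finset.sum_congr rfl fun i _ => RCLike.conj_mul (x i)

theorem exists_of_sum_norm_sq_eq_half {x : ι → 𝕜} {Δ : Finset ι}
    (hΔ : ∑ i ∈ Δ, ‖x i‖ ^ 2 = 1 / 2) :
    ∃ ψ : ι → 𝕜, star ψ ⬝ᵥ ψ = 1 ∧ ∀ i, (ψ i - 2 * (star x ⬝ᵥ ψ) * x i) * star (ψ i) = 0 := by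
  set y := Set.indicator ↑Δ x
  have hy : ∀ i, y i = x i ∨ y i = 0 := fun i => by
    by_cases hi : i ∈ Δ <;> simp [y, hi]
  have hxy : star x ⬝ᵥ y = 1 / 2 := by
    rw [star_dotProduct_indicator, hΔ]; push_cast; ring
  have hyy : star y ⬝ᵥ y = 1 / 2 := by
    rw [← hxy]
    refine Finset.sum_congr rfl fun i _ => ?_
    rcases hy i with h | h <;> simp [h]
  have hsqrt : (√2 : 𝕜) * √2 = 2 := by exact_mod_cast Real.mul_self_sqrt zero_le_two
  refine ⟨(√2 : 𝕜) • y, ?_, fun i => ?_⟩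
  · rw [star_smul, smul_dotProduct, dotProduct_smul, hyy, RCLike.star_def, RCLike.conj_ofReal,
      smul_eq_mul, smul_eq_mul, ← mul_assoc, hsqrt]
    norm_num
  · rw [dotProduct_smul, hxy]
    rcases hy i with h | h
    · simp only [Pi.smul_apply, h, smul_eq_mul]; ring
    · simp [h]

theorem stmt13_general (d : ℕ) (x : Fin d → ℂ)
    (U : Matrix (Fin d) (Fin d) ℂ)
    (hUdef : U = 1 - (2 : ℂ) • Matrix.vecMulVec x (star x)) :
    (∃ ψ : Fin d → ℂ, star ψ ⬝ᵥ ψ = 1 ∧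
        ∀ i, (Uᴴ * Matrix.vecMulVec ψ (star ψ)) i i = 0)
      ↔ (∃ Δ : Finset (Fin d), ∑ i ∈ Δ, ‖x i‖ ^ 2 = 1 / 2) := by
  have hdiag : ∀ ψ i, (Uᴴ * vecMulVec ψ (star ψ)) i i =
      (ψ i - 2 * (star x ⬝ᵥ ψ) * x i) * star (ψ i) := fun ψ i => by
    rw [mul_vecMulVec_star_self_apply_self, hUdef, householder_conjTranspose_mulVec]; rfl
  simp only [hdiag]
  exact ⟨fun ⟨ψ, hψ, h⟩ => ⟨_, sum_norm_sq_support_eq_half hψ h⟩,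
    fun ⟨_, hΔ⟩ => exists_of_sum_norm_sq_eq_half hΔ⟩

theorem stmt13 (d : ℕ) (x : Fin d → ℂ)
    (hx : ∑ i, ‖x i‖ ^ 2 = 1)
    (U : Matrix (Fin d) (Fin d) ℂ)
    (hUdef : U = 1 - (2 : ℂ) • Matrix.vecMulVec x (star x)) :
    (∃ ψ : Fin d → ℂ, star ψ ⬝ᵥ ψ = 1 ∧
        ∀ i, (Uᴴ * Matrix.vecMulVec ψ (star ψ)) i i = 0)
      ↔ (∃ Δ : Finset (Fin d), ∑ i ∈ Δ, ‖x i‖ ^ 2 = 1 / 2) :=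
  stmt13_general d x U hUdef
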